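/- For every real p with 1/2 ≤ p < 1, one has s(p) < 1 − p. -/
import Mathlib


/-- `v p n` is the optimal expected number of heads in the coin game with `n` coins,
each landing heads with probability `p`. -/
noncomputable def v (p : ℝ) : ℕ → ℝ
  | 0 => 0
  | n + 1 =>
      ((n : ℝ) + 1) * p ^ (n + 1) + v p n * (1 - p) ^ (n + 1) +
        ∑ j ∈ (Finset.Icc 1 n).attach,
          (((n + 1).choose j.1 : ℕ) : ℝ) * p ^ (j.1 : ℕ) * (1 - p) ^ (n + 1 - j.1) *
            ((Finset.Icc 1 j.1).attach.sup'
              (Finset.attach_nonempty_iff.mpr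
                (Finset.nonempty_Icc.mpr (Finset.mem_Icc.mp j.2).1))
              (fun i => v p (n + 1 - i.1) + (i.1 : ℝ)))
decreasing_by
  · omega
  · have h := (Finset.mem_Icc.mp i.2).1
    omega

/-- `s p n = v p n - n + 1 - p`. -/
noncomputable def s (p : ℝ) (n : ℕ) : ℝ := v p n - n + 1 - p

/-- Auxiliary decreasing sequence of lower bounds on `n - v p n`. -/
noncomputable def C (p : ℝ) (n : ℕ) : ℝ := (1 - p) * ∏ k ∈ Finset.Ioc 1 n, (1 - p ^ k)

lemma C_one (p : ℝ) : C p 1 = 1 - p := by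
  simp [C]

lemma C_succ (p : ℝ) {n : ℕ} (hn : 1 ≤ n) : C p (n + 1) = C p n * (1 - p ^ (n + 1)) := by
  rw [C, C, Finset.prod_Ioc_succ_top hn]
  ring

lemma v_one (p : ℝ) : v p 1 = p := by
  rw [v]
  rw [v]
  have h : (∑ j ∈ (Finset.Icc 1 0).attach,
      (((0 + 1).choose j.1 : ℕ) : ℝ) * p ^ (j.1 : ℕ) * (1 - p) ^ (0 + 1 - j.1) *
        ((Finset.Icc 1 j.1).attach.sup'
          (Finset.attach_nonempty_iff.mpr
            (Finset.nonempty_Icc.mpr (Finset.mem_Icc.mp j.2).1))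
          (fun i => v p (0 + 1 - i.1) + (i.1 : ℝ)))) = 0 := by
    apply Finset.sum_eq_zero
    intro x _
    exact absurd x.2 (by rw [Finset.mem_Icc]; omega)
  simp only [Nat.cast_zero] at h ⊢
  rw [h] at *
  norm_num

lemma sum_w (p : ℝ) (n : ℕ) :
    ∑ j ∈ Finset.Icc 1 n, (((n + 1).choose j : ℕ) : ℝ) * p ^ j * (1 - p) ^ (n + 1 - j)
      = 1 - p ^ (n + 1) - (1 - p) ^ (n + 1) := by
  have key := add_pow p (1 - p) (n + 1)
  have hps : p + (1 - p) = 1 := by ring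
  rw [hps, one_pow] at key
  have hins : Finset.range (n + 1) = insert 0 (Finset.Icc 1 n) := by
    ext x; simp [Finset.mem_range, Finset.mem_Icc]; omega
  rw [Finset.sum_range_succ, hins, Finset.sum_insert (by simp)] at key
  simp only [pow_zero, Nat.choose_zero_right, Nat.sub_zero, Nat.choose_self,
    Nat.sub_self, Nat.cast_one] at key
  have : ∑ j ∈ Finset.Icc 1 n, (((n + 1).choose j : ℕ) : ℝ) * p ^ j * (1 - p) ^ (n + 1 - j)
      = ∑ j ∈ Finset.Icc 1 n, p ^ j * (1 - p) ^ (n + 1 - j) * (((n + 1).choose j : ℕ) : ℝ) := by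
    apply Finset.sum_congr rfl; intro j _; ring
  rw [this]
  nlinarith [key]

lemma step (p : ℝ) (hp0 : 0 ≤ p) (hp1 : p ≤ 1) {n : ℕ} (hn : 1 ≤ n) {c : ℝ}
    (h : ∀ m, 1 ≤ m → m ≤ n → v p m ≤ m - c) :
    v p (n + 1) ≤ (n + 1 : ℝ) - c * (1 - p ^ (n + 1)) - (1 - p) ^ (n + 1) := by
  have hq0 : (0 : ℝ) ≤ 1 - p := by linarith
  rw [v]
  have h2 : v p n * (1 - p) ^ (n + 1) ≤ ((n : ℝ) - c) * (1 - p) ^ (n + 1) :=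
    mul_le_mul_of_nonneg_right (h n hn le_rfl) (pow_nonneg hq0 _)
  have h3 : ∑ j ∈ (Finset.Icc 1 n).attach,
          (((n + 1).choose j.1 : ℕ) : ℝ) * p ^ (j.1 : ℕ) * (1 - p) ^ (n + 1 - j.1) *
            ((Finset.Icc 1 j.1).attach.sup'
              (Finset.attach_nonempty_iff.mpr
                (Finset.nonempty_Icc.mpr (Finset.mem_Icc.mp j.2).1))
              (fun i => v p (n + 1 - i.1) + (i.1 : ℝ)))
      ≤ (1 - p ^ (n + 1) - (1 - p) ^ (n + 1)) * ((n : ℝ) + 1 - c) := by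
    have hbound : ∀ j ∈ (Finset.Icc 1 n).attach,
        (((n + 1).choose j.1 : ℕ) : ℝ) * p ^ (j.1 : ℕ) * (1 - p) ^ (n + 1 - j.1) *
            ((Finset.Icc 1 j.1).attach.sup'
              (Finset.attach_nonempty_iff.mpr
                (Finset.nonempty_Icc.mpr (Finset.mem_Icc.mp j.2).1))
              (fun i => v p (n + 1 - i.1) + (i.1 : ℝ)))
        ≤ (((n + 1).choose j.1 : ℕ) : ℝ) * p ^ (j.1 : ℕ) * (1 - p) ^ (n + 1 - j.1) *
            ((n : ℝ) + 1 - c) := by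
      intro j _
      have hw : (0 : ℝ) ≤ (((n + 1).choose j.1 : ℕ) : ℝ) * p ^ (j.1 : ℕ) * (1 - p) ^ (n + 1 - j.1) := by
        positivity
      refine mul_le_mul_of_nonneg_left ?_ hw
      apply Finset.sup'_le
      intro i _
      obtain ⟨hi1, hi2⟩ := Finset.mem_Icc.mp i.2
      obtain ⟨hj1, hj2⟩ := Finset.mem_Icc.mp j.2
      have hm1 : 1 ≤ n + 1 - i.1 := by omega
      have hm2 : n + 1 - i.1 ≤ n := by omega
      have hv := h (n + 1 - i.1) hm1 hm2
      have hcast : ((n + 1 - i.1 : ℕ) : ℝ) = (n : ℝ) + 1 - (i.1 : ℝ) := by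
        have : i.1 ≤ n + 1 := by omega
        push_cast [Nat.cast_sub this]
        ring
      rw [hcast] at hv
      linarith
    calc _ ≤ ∑ j ∈ (Finset.Icc 1 n).attach,
          (((n + 1).choose j.1 : ℕ) : ℝ) * p ^ (j.1 : ℕ) * (1 - p) ^ (n + 1 - j.1) *
            ((n : ℝ) + 1 - c) := Finset.sum_le_sum hbound
      _ = (∑ j ∈ (Finset.Icc 1 n).attach,
          (((n + 1).choose j.1 : ℕ) : ℝ) * p ^ (j.1 : ℕ) * (1 - p) ^ (n + 1 - j.1)) *
            ((n : ℝ) + 1 - c) := by rw [Finset.sum_mul]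
      _ = (1 - p ^ (n + 1) - (1 - p) ^ (n + 1)) * ((n : ℝ) + 1 - c) := by
          rw [Finset.sum_attach (Finset.Icc 1 n)
            (fun j => (((n + 1).choose j : ℕ) : ℝ) * p ^ j * (1 - p) ^ (n + 1 - j)), sum_w]
  have e : ((n : ℝ) + 1) * p ^ (n + 1) + ((n : ℝ) - c) * (1 - p) ^ (n + 1)
      + (1 - p ^ (n + 1) - (1 - p) ^ (n + 1)) * ((n : ℝ) + 1 - c)
      = (n + 1 : ℝ) - c * (1 - p ^ (n + 1)) - (1 - p) ^ (n + 1) := by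
    ring
  linarith

lemma C_nonneg (p : ℝ) (hp0 : 0 ≤ p) (hp1 : p ≤ 1) (n : ℕ) : 0 ≤ C p n := by
  apply mul_nonneg (by linarith)
  apply Finset.prod_nonneg
  intro k _
  have := pow_le_one₀ hp0 hp1 (n := k)
  linarith

lemma vbound (p : ℝ) (hp0 : 0 ≤ p) (hp1 : p ≤ 1) :
    ∀ n, 1 ≤ n → ∀ m, 1 ≤ m → m ≤ n → v p m ≤ m - C p n := by
  intro n hn
  induction n, hn using Nat.le_induction with
  | base =>
    intro m hm1 hm2
    have hm : m = 1 := le_antisymm hm2 hm1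
    subst hm
    rw [v_one, C_one]
    norm_num
  | succ n hn ih =>
    have hCsucc := C_succ p hn
    have hC0 := C_nonneg p hp0 hp1 n
    have hpow0 : (0 : ℝ) ≤ p ^ (n + 1) := pow_nonneg hp0 _
    have hpow1 : p ^ (n + 1) ≤ 1 := pow_le_one₀ hp0 hp1
    have hCle : C p (n + 1) ≤ C p n := by
      rw [hCsucc]
      nlinarith
    intro m hm1 hm2
    rcases Nat.lt_or_ge m (n + 1) with hlt | hge
    · have := ih m hm1 (by omega)
      linarith
    · have hm : m = n + 1 := by omega
      subst hm
      have hstep := step p hp0 hp1 hn (fun m h1 h2 => ih m h1 h2)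
      have hq : (0 : ℝ) ≤ (1 - p) ^ (n + 1) := pow_nonneg (by linarith) _
      rw [hCsucc]
      push_cast at hstep ⊢
      nlinarith

lemma tail_sum (p : ℝ) (N : ℕ) :
    ∀ n, N ≤ n → (1 - p) * ∑ k ∈ Finset.Ioc N n, p ^ k = p ^ (N + 1) - p ^ (n + 1) := by
  intro n hn
  induction n, hn using Nat.le_induction with
  | base => simp
  | succ n hn ih =>
    rw [Finset.sum_Ioc_succ_top hn, mul_add, ih]
    ring

lemma tail_prod (p : ℝ) (hp0 : 0 ≤ p) (hp1 : p ≤ 1) (N : ℕ) :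
    ∀ n, N ≤ n →
      1 - ∑ k ∈ Finset.Ioc N n, p ^ k ≤ ∏ k ∈ Finset.Ioc N n, (1 - p ^ k) := by
  intro n hn
  induction n, hn using Nat.le_induction with
  | base => simp
  | succ n hn ih =>
    rw [Finset.sum_Ioc_succ_top hn, Finset.prod_Ioc_succ_top hn]
    have hS : 0 ≤ ∑ k ∈ Finset.Ioc N n, p ^ k :=
      Finset.sum_nonneg fun k _ => pow_nonneg hp0 _
    have hx0 : (0 : ℝ) ≤ p ^ (n + 1) := pow_nonneg hp0 _
    have hx1 : p ^ (n + 1) ≤ 1 := pow_le_one₀ hp0 hp1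
    nlinarith [mul_le_mul_of_nonneg_right ih (by linarith : (0:ℝ) ≤ 1 - p ^ (n + 1))]

lemma C_lower (p : ℝ) (hp0 : 0 ≤ p) (hp2 : p < 1) :
    ∃ ε > 0, ∀ n, 1 ≤ n → ε ≤ C p n := by
  obtain ⟨N0, hN0⟩ := exists_pow_lt_of_lt_one (show (0:ℝ) < (1 - p) / 2 by linarith) hp2
  set N := N0 + 1 with hN
  have hN1 : 1 ≤ N := by omega
  have hpN : p ^ (N + 1) ≤ (1 - p) / 2 := by
    calc p ^ (N + 1) ≤ p ^ N0 := pow_le_pow_of_le_one hp0 hp2.le (by omega)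
      _ ≤ (1 - p) / 2 := hN0.le
  have hCN : 0 < C p N := by
    apply mul_pos (by linarith)
    apply Finset.prod_pos
    intro k hk
    have hk1 : k ≠ 0 := by have := (Finset.mem_Ioc.mp hk).1; omega
    have := pow_lt_one₀ hp0 hp2 hk1
    linarith
  refine ⟨C p N / 2, by linarith, ?_⟩
  intro n hn
  rcases Nat.lt_or_ge n N with hlt | hge
  · -- n ≤ N : C p n ≥ C p N ≥ C p N / 2
    have hsplit2 : (∏ k ∈ Finset.Ioc 1 n, (1 - p ^ k)) * ∏ k ∈ Finset.Ioc n N, (1 - p ^ k)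
        = ∏ k ∈ Finset.Ioc 1 N, (1 - p ^ k) :=
      Finset.prod_Ioc_consecutive _ hn (le_of_lt hlt)
    have ht1 : ∏ k ∈ Finset.Ioc n N, (1 - p ^ k) ≤ 1 := by
      apply Finset.prod_le_one
      · intro k _
        have := pow_le_one₀ hp0 hp2.le (n := k); linarith
      · intro k _
        have := pow_nonneg hp0 k; linarith
    have hCn0 := C_nonneg p hp0 hp2.le n
    have heq2 : C p N = C p n * ∏ k ∈ Finset.Ioc n N, (1 - p ^ k) := by
      rw [C, C, mul_assoc, hsplit2]
    have : C p N ≤ C p n := by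
      rw [heq2]
      exact mul_le_of_le_one_right hCn0 ht1
    linarith
  · -- n ≥ N : split product
    have hsplit : (∏ k ∈ Finset.Ioc 1 N, (1 - p ^ k)) * ∏ k ∈ Finset.Ioc N n, (1 - p ^ k)
        = ∏ k ∈ Finset.Ioc 1 n, (1 - p ^ k) :=
      Finset.prod_Ioc_consecutive _ hN1 hge
    have hsum : ∑ k ∈ Finset.Ioc N n, p ^ k ≤ 1 / 2 := by
      have h1 := tail_sum p N n hge
      have h2 : (0:ℝ) ≤ p ^ (n + 1) := pow_nonneg hp0 _
      nlinarith
    have hprodge : (1 : ℝ) / 2 ≤ ∏ k ∈ Finset.Ioc N n, (1 - p ^ k) := by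
      have := tail_prod p hp0 hp2.le N n hge
      linarith
    have : C p N * (1 / 2) ≤ C p N * ∏ k ∈ Finset.Ioc N n, (1 - p ^ k) :=
      mul_le_mul_of_nonneg_left hprodge hCN.le
    have heq : C p N * ∏ k ∈ Finset.Ioc N n, (1 - p ^ k) = C p n := by
      rw [C, C, mul_assoc, hsplit]
    linarith

theorem coin_game_s_lt_one_sub_p (S : ℝ → ℝ)
    (hS : ∀ p : ℝ, 1 / 2 ≤ p → p ≤ 1 →
      Filter.Tendsto (fun n : ℕ => s p n) Filter.atTop (nhds (S p)))
    (p : ℝ) (hp1 : 1 / 2 ≤ p) (hp2 : p < 1) :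
    S p < 1 - p := by
  have hp0 : (0 : ℝ) ≤ p := by linarith
  obtain ⟨ε, hε, hεC⟩ := C_lower p hp0 hp2
  have hub : ∀ n : ℕ, 1 ≤ n → s p n ≤ 1 - p - ε := by
    intro n hn
    have hv := vbound p hp0 hp2.le n hn n hn le_rfl
    have hC := hεC n hn
    unfold s
    linarith
  have hle : S p ≤ 1 - p - ε := by
    apply le_of_tendsto (hS p hp1 hp2.le)
    filter_upwards [Filter.eventually_ge_atTop 1] with n hn
    exact hub n hn
  linarith
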